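/- arXiv:1906.11038 — 3 statements merged into one kernel-verified Lean document; each statement's English description precedes it below -/
import Mathlib

section
/- If 0 < δ < 3, 1 < r < ∞, and P is a polynomial on ℝ³ belonging to L^r(w_δ dx), then P = 0. -/
/-!
Write `P = ∑_{j ≤ d} P_j` with `P_j` homogeneous of degree `j` and `P_d ≠ 0`. Then
`t⁻ᵈ P(t y) = ∑_j t^{j-d} P_j(y)` is a continuous function of `(t⁻¹, y)` which equals
`P_d(y)` at `t⁻¹ = 0`, so on a small ball `B` around a point `z ≠ 0` with `P_d(z) ≠ 0`
(rescaled far enough out) `|P(t y)| ≥ m > 0` for all `t ≥ 1`. The dyadic dilates `2ᵏ B` are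
disjoint, and since `|x| ≲ 2ᵏ` on `2ᵏ B` while `vol(2ᵏ B) = 2³ᵏ vol(B)`, each carries
`w_δ`-mass bounded below when `δ ≤ 3`. Hence `{|P| ≥ m}` has infinite `w_δ`-measure, which
Chebyshev's inequality forbids for `P ∈ L^r(w_δ)`.
-/

open MeasureTheory Real ENNReal
open scoped Pointwise
open Module

namespace MvPolynomial

variable {σ R : Type*} [CommSemiring R]

theorem IsHomogeneous.eval_smul {φ : MvPolynomial σ R} {n : ℕ} (hφ : φ.IsHomogeneous n)
    (t : R) (x : σ → R) : eval (t • x) φ = t ^ n * eval x φ := by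
  simp only [eval_eq, Finset.mul_sum]
  refine Finset.sum_congr rfl fun b hb => ?_
  have hb : ∑ i ∈ b.support, b i = n := by
    rw [← Finsupp.degree_apply, Finsupp.degree_eq_weight_one]
    exact hφ (mem_support_iff.mp hb)
  simp only [Pi.smul_apply, smul_eq_mul, mul_pow, Finset.prod_mul_distrib,
    Finset.prod_pow_eq_pow_sum, hb]
  ring

theorem eval_smul_eq_sum_homogeneousComponent (φ : MvPolynomial σ R) (t : R) (x : σ → R) :
    eval (t • x) φ = ∑ j ∈ Finset.range (φ.totalDegree + 1),
      t ^ j * eval x (homogeneousComponent j φ) := by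
  conv_lhs => rw [← sum_homogeneousComponent φ]
  simp only [map_sum, (homogeneousComponent_isHomogeneous _ _).eval_smul]

theorem homogeneousComponent_totalDegree_ne_zero {φ : MvPolynomial σ R} (hφ : φ ≠ 0) :
    homogeneousComponent φ.totalDegree φ ≠ 0 := by
  obtain ⟨b, hb, hbd⟩ := Finset.exists_mem_eq_sup φ.support (support_nonempty.mpr hφ)
    fun s => s.sum fun _ e => e
  refine ne_of_apply_ne (coeff b) ?_
  rw [coeff_homogeneousComponent, if_pos, coeff_zero]
  · exact mem_support_iff.mp hb
  · exact hbd.symm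

theorem exists_eval_ne_zero {K : Type*} [CommRing K] [IsDomain K] [Infinite K]
    {φ : MvPolynomial σ K} (hφ : φ ≠ 0) : ∃ x, eval x φ ≠ 0 := by
  by_contra! h
  exact hφ (MvPolynomial.funext fun x => by simp [h x])

open Filter Topology in
theorem exists_mem_nhds_forall_le_abs_eval_smul (φ : MvPolynomial σ ℝ) {z : σ → ℝ}
    (hz : eval z (homogeneousComponent φ.totalDegree φ) ≠ 0) :
    ∃ U ∈ 𝓝 z, ∃ T : ℝ, ∀ y ∈ U, ∀ t ≥ T,
      |eval z (homogeneousComponent φ.totalDegree φ)| / 2 ≤ |eval (t • y) φ| := by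
  set d := φ.totalDegree
  -- `G (t⁻¹, y) = t⁻ᵈ φ (t • y)` extends continuously to `t⁻¹ = 0` by the top component
  set G : ℝ × (σ → ℝ) → ℝ := fun p =>
    ∑ j ∈ Finset.range (d + 1), p.1 ^ (d - j) * eval p.2 (homogeneousComponent j φ)
  have hG : Continuous G := continuous_finsetSum _ fun j _ =>
    (continuous_fst.pow _).mul ((continuous_eval _).comp continuous_snd)
  have hG0 : G (0, z) = eval z (homogeneousComponent d φ) := by
    simp only [G]
    rw [Finset.sum_range_succ, Finset.sum_eq_zero fun j hj => ?_, Nat.sub_self, pow_zero,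
      one_mul, zero_add]
    rw [zero_pow (by simp at hj; omega), zero_mul]
  have hscale : ∀ t : ℝ, t ≠ 0 → ∀ y, eval (t • y) φ = t ^ d * G (t⁻¹, y) := by
    intro t ht y
    rw [eval_smul_eq_sum_homogeneousComponent, Finset.mul_sum]
    refine Finset.sum_congr rfl fun j hj => ?_
    rw [← pow_mul_pow_sub t (Finset.mem_range_succ_iff.mp hj), inv_pow]
    field_simp
  have hev : ∀ᶠ p in 𝓝 (0 : ℝ) ×ˢ 𝓝 z, |G (0, z)| / 2 < |G p| := by
    rw [← nhds_prod_eq]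
    exact hG.abs.continuousAt.eventually (lt_mem_nhds (half_lt_self (abs_pos.mpr (hG0 ▸ hz))))
  obtain ⟨pa, hpa, pb, hpb, hp⟩ := eventually_prod_iff.mp hev
  obtain ⟨T, hT⟩ := eventually_atTop.mp
    ((eventually_ge_atTop 1).and (tendsto_inv_atTop_zero.eventually hpa))
  refine ⟨{y | pb y}, hpb, T, fun y hy t ht => ?_⟩
  obtain ⟨ht1, hta⟩ := hT t ht
  rw [hscale t (by positivity) y, abs_mul, abs_pow, ← hG0]
  calc |G (0, z)| / 2 ≤ |G (t⁻¹, y)| := (hp hta hy).le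
    _ ≤ |t| ^ d * |G (t⁻¹, y)| :=
      le_mul_of_one_le_left (abs_nonneg _) (one_le_pow₀ (by rwa [abs_of_pos (by positivity)]))

theorem exists_ball_forall_le_abs_eval_smul {ι : Type*} [Fintype ι] [Nonempty ι]
    {φ : MvPolynomial ι ℝ} (hφ : φ ≠ 0) :
    ∃ z : EuclideanSpace ℝ ι, ∃ η m : ℝ, 0 < η ∧ 3 * η < ‖z‖ ∧ 0 < m ∧
      ∀ y ∈ Metric.ball z η, ∀ t : ℝ, 1 ≤ t → m ≤ |eval (t • y).ofLp φ| := by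
  set H := homogeneousComponent φ.totalDegree φ
  have hcont : Continuous fun x : EuclideanSpace ℝ ι => eval x.ofLp H :=
    (continuous_eval H).comp (PiLp.continuous_ofLp 2 _)
  obtain ⟨x, hx⟩ := exists_eval_ne_zero (homogeneousComponent_totalDegree_ne_zero hφ)
  obtain ⟨z, hz, hz0⟩ := (dense_compl_singleton 0).inter_open_nonempty _
    (isOpen_ne_fun hcont continuous_const) ⟨WithLp.toLp 2 x, hx⟩
  obtain ⟨U, hU, T, hT⟩ := exists_mem_nhds_forall_le_abs_eval_smul φ hz
  obtain ⟨η, hη, hball⟩ := Metric.mem_nhds_iff.mp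
    ((PiLp.continuous_ofLp 2 _).continuousAt.preimage_mem_nhds hU)
  have hz0 : 0 < ‖z‖ := norm_pos_iff.mpr hz0
  set η' := min η (‖z‖ / 4)
  set T' := max T 1
  have hT' : 0 < T' := lt_max_of_lt_right one_pos
  refine ⟨T' • z, T' * η', _, by positivity, ?_, half_pos (abs_pos.mpr hz), ?_⟩
  · rw [norm_smul, Real.norm_of_nonneg hT'.le]
    nlinarith [min_le_right η (‖z‖ / 4)]
  · intro y hy t ht
    rw [show T' * η' = ‖T'‖ * η' by rw [Real.norm_of_nonneg hT'.le], ← smul_ball hT'.ne'] at hy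
    obtain ⟨y, hy, rfl⟩ := hy
    rw [smul_smul, WithLp.ofLp_smul]
    exact hT _ (hball (Metric.ball_subset_ball (min_le_left _ _) hy)) _
      (by nlinarith [le_max_left T 1])

end MvPolynomial

theorem inv_pow_le_rpow_neg {s B δ : ℝ} {n : ℕ} (hs : 1 ≤ s) (hsB : s ≤ B) (hδ : δ ≤ n) :
    (B ^ n)⁻¹ ≤ s ^ (-δ) :=
  calc (B ^ n)⁻¹ ≤ (s ^ n)⁻¹ := by gcongr
    _ = s ^ (-(n : ℝ)) := by rw [Real.rpow_neg (by linarith), Real.rpow_natCast]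
    _ ≤ s ^ (-δ) := rpow_le_rpow_of_exponent_le hs (neg_le_neg hδ)

theorem smul_subset_norm_mem_Ico {E : Type*} [SeminormedAddCommGroup E] [NormedSpace ℝ E]
    {V : Set E} {ρ σ c : ℝ} (hc : 0 < c) (hV : V ⊆ {x | ‖x‖ ∈ Set.Ico ρ σ}) :
    c • V ⊆ {x | ‖x‖ ∈ Set.Ico (c * ρ) (c * σ)} := by
  rintro _ ⟨y, hy, rfl⟩
  rw [Set.mem_ofPred_eq, norm_smul, Real.norm_of_nonneg hc.le]
  exact ⟨by gcongr; exact (hV hy).1, by gcongr; exact (hV hy).2⟩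

theorem ball_subset_norm_mem_Ico {E : Type*} [SeminormedAddCommGroup E] {z : E} {η : ℝ}
    (h : 3 * η < ‖z‖) : Metric.ball z η ⊆ {x | ‖x‖ ∈ Set.Ico (‖z‖ - η) (2 * (‖z‖ - η))} := by
  intro x hx
  rw [Metric.mem_ball, dist_eq_norm] at hx
  constructor <;> linarith [norm_sub_norm_le z x, norm_sub_norm_le x z, norm_sub_rev x z]

section WeightedMeasure

variable {E : Type*} [NormedAddCommGroup E] [NormedSpace ℝ E] [FiniteDimensional ℝ E]
  [MeasurableSpace E] [BorelSpace E] (μ : Measure E) [μ.IsAddHaarMeasure]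

theorem le_withDensity_smul {V : Set E} {R δ c : ℝ} (hR : 0 ≤ R) (hV : V ⊆ {x | ‖x‖ < R})
    (hδ : δ ≤ finrank ℝ E) (hc : 1 ≤ c) :
    ENNReal.ofReal (((1 + R) ^ finrank ℝ E)⁻¹) * μ V ≤
      μ.withDensity (fun x => ENNReal.ofReal ((1 + ‖x‖) ^ (-δ))) (c • V) := by
  set b := ((c * (1 + R)) ^ finrank ℝ E)⁻¹ with hb_def
  have hb : ∀ x ∈ c • V, ENNReal.ofReal b ≤ ENNReal.ofReal ((1 + ‖x‖) ^ (-δ)) := by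
    rintro _ ⟨y, hy, rfl⟩
    refine ENNReal.ofReal_le_ofReal (inv_pow_le_rpow_neg (by simp) ?_ hδ)
    rw [norm_smul, Real.norm_of_nonneg (by linarith)]
    nlinarith [norm_nonneg y, show ‖y‖ < R from hV hy]
  calc ENNReal.ofReal (((1 + R) ^ finrank ℝ E)⁻¹) * μ V = ENNReal.ofReal b * μ (c • V) := by
        rw [Measure.addHaar_smul, ← mul_assoc, ← ENNReal.ofReal_mul (by positivity),
          abs_of_nonneg (by positivity)]
        congr 2
        rw [hb_def, mul_pow, mul_inv, mul_right_comm, inv_mul_cancel₀ (by positivity), one_mul]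
    _ = ∫⁻ _ in c • V, ENNReal.ofReal b ∂μ := (setLIntegral_const _ _).symm
    _ ≤ ∫⁻ x in c • V, ENNReal.ofReal ((1 + ‖x‖) ^ (-δ)) ∂μ :=
        setLIntegral_mono (by fun_prop) hb
    _ = _ := (withDensity_apply' _ _).symm

theorem withDensity_iUnion_two_pow_smul_eq_top {V : Set E} {ρ δ : ℝ} (hV : MeasurableSet V)
    (hμV : μ V ≠ 0) (hVρ : V ⊆ {x | ‖x‖ ∈ Set.Ico ρ (2 * ρ)}) (hδ : δ ≤ finrank ℝ E) :
    μ.withDensity (fun x => ENNReal.ofReal ((1 + ‖x‖) ^ (-δ))) (⋃ k : ℕ, (2 : ℝ) ^ k • V) = ∞ := by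
  obtain ⟨y, hy⟩ := nonempty_of_measure_ne_zero hμV
  have hρ : 0 < ρ := by obtain ⟨h1, h2⟩ := hVρ hy; linarith
  have hdisj : Pairwise (Function.onFun Disjoint fun k : ℕ => (2 : ℝ) ^ k • V) := by
    refine (pairwise_disjoint_on _).mpr fun i j hij => Set.disjoint_left.mpr fun x hi hj => ?_
    obtain ⟨-, hi⟩ := smul_subset_norm_mem_Ico (by positivity) hVρ hi
    obtain ⟨hj, -⟩ := smul_subset_norm_mem_Ico (by positivity) hVρ hj
    have h2 : (2 : ℝ) ^ (i + 1) ≤ 2 ^ j := pow_le_pow_right₀ one_le_two hij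
    rw [pow_succ] at h2
    nlinarith [mul_le_mul_of_nonneg_right h2 hρ.le]
  rw [measure_iUnion hdisj fun k => hV.const_smul_of_ne_zero (by positivity), eq_top_iff]
  calc ∞ = ∑' _ : ℕ, ENNReal.ofReal (((1 + 2 * ρ) ^ finrank ℝ E)⁻¹) * μ V :=
        (ENNReal.tsum_const_eq_top_of_ne_zero (mul_ne_zero (by positivity) hμV)).symm
    _ ≤ _ := ENNReal.tsum_le_tsum fun k =>
        le_withDensity_smul μ (by positivity) (fun x hx => (hVρ hx).2) hδ (one_le_pow₀ one_le_two)

end WeightedMeasure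

theorem polynomial_in_weighted_Lr_eq_zero_general (δ r : ℝ) (hδ3 : δ < 3) (hr : 1 < r)
    (P : MvPolynomial (Fin 3) ℝ)
    (hP : MemLp (fun x : EuclideanSpace ℝ (Fin 3) => MvPolynomial.eval (fun i => x i) P)
      (ENNReal.ofReal r)
      (volume.withDensity fun x => ENNReal.ofReal ((1 + ‖x‖) ^ (-δ)))) :
    P = 0 := by
  by_contra hP0
  obtain ⟨z, η, m, hη, hz, hm, hPm⟩ := MvPolynomial.exists_ball_forall_le_abs_eval_smul hP0
  have hδ : δ ≤ finrank ℝ (EuclideanSpace ℝ (Fin 3)) := by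
    rw [finrank_euclideanSpace_fin]; exact_mod_cast hδ3.le
  have hinf := withDensity_iUnion_two_pow_smul_eq_top volume measurableSet_ball
    (Metric.measure_ball_pos volume z hη).ne' (ball_subset_norm_mem_Ico hz) hδ
  have hfin := hP.meas_ge_lt_top (ENNReal.ofReal_pos.mpr (by linarith)).ne' ofReal_ne_top
    (ε := m.toNNReal) (by simpa using hm)
  have hsub : (⋃ k : ℕ, (2 : ℝ) ^ k • Metric.ball z η) ⊆
      {x | m.toNNReal ≤ ‖MvPolynomial.eval (fun i => x i) P‖₊} := by
    rintro _ ⟨_, ⟨k, rfl⟩, y, hy, rfl⟩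
    rw [Set.mem_ofPred_eq, Real.toNNReal_le_iff_le_coe, coe_nnnorm, Real.norm_eq_abs]
    exact hPm y hy _ (one_le_pow₀ one_le_two)
  exact (measure_mono hsub |>.trans_lt hfin).ne hinf

/-- If `0 < δ < 3`, `1 < r < ∞`, and a polynomial `P` on `ℝ³` belongs to `L^r(w_δ dx)`,
then `P = 0`. -/
theorem polynomial_in_weighted_Lr_eq_zero (δ r : ℝ) (hδ0 : 0 < δ) (hδ3 : δ < 3) (hr : 1 < r)
    (P : MvPolynomial (Fin 3) ℝ)
    (hP : MemLp (fun x : EuclideanSpace ℝ (Fin 3) => MvPolynomial.eval (fun i => x i) P)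
      (ENNReal.ofReal r)
      (volume.withDensity fun x => ENNReal.ofReal ((1 + ‖x‖) ^ (-δ)))) :
    P = 0 :=
  polynomial_in_weighted_Lr_eq_zero_general δ r hδ3 hr P hP
end

section
/- If γ > 1, λ > 1, and u₀ ∈ L²_loc(ℝ³) is λ-discretely self-similar (λu₀(λx) = u₀(x) a.e.), then u₀ ∈ L²(w_γ dx), and there exist positive constants A and B (depending only on γ and λ) such that A ∫_{1<|x|≤λ} |u₀(x)|² dx ≤ ∫ |u₀(x)|² w_γ(x) dx ≤ B ∫_{1<|x|≤λ} |u₀(x)|² dx. -/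
/-!
Cut `ℝ³ \ {0}` into the annuli `Λ ^ k < ‖x‖ ≤ Λ ^ (k + 1)`, `k ∈ ℤ`. The change of variables
`x ↦ Λ x` maps the `k`-th annulus onto the `(k + 1)`-st and multiplies Lebesgue measure by `Λ³`,
while `|u₀(x)|² = Λ² |u₀(Λx)|²`; hence the mass of `|u₀|²` on the `k`-th annulus is `Λ ^ k` times
its mass on `1 < ‖x‖ ≤ Λ`, which is finite by local integrability. On the `k`-th annulus the
weight is at most `(1 + Λ ^ k) ^ (-γ)`, so the weighted integral is bounded by that mass times
`∑ₖ (1 + Λ ^ k) ^ (-γ) Λ ^ k`, which converges for `γ > 1`; the lower bound only looks at the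
annulus `k = 0`, where the weight is at least `(1 + Λ) ^ (-γ)`.
-/

open MeasureTheory Real ENNReal Set Module

section Annulus

variable {E : Type*} [NormedAddCommGroup E]

def annulus (Λ : ℝ) (k : ℤ) : Set E := {x | Λ ^ k < ‖x‖ ∧ ‖x‖ ≤ Λ ^ (k + 1)}

theorem annulus_zero (Λ : ℝ) : (annulus Λ 0 : Set E) = {x | 1 < ‖x‖ ∧ ‖x‖ ≤ Λ} := by
  simp [annulus]

theorem pairwise_disjoint_annulus {Λ : ℝ} (hΛ : 1 < Λ) :
    Pairwise (Function.onFun Disjoint (annulus Λ : ℤ → Set E)) := by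
  refine (pairwise_disjoint_on _).2 fun k l hkl => disjoint_left.2 fun x hk hl => ?_
  have : Λ ^ (k + 1) ≤ Λ ^ l := zpow_le_zpow_right₀ hΛ.le hkl
  exact (hl.1.trans_le hk.2).not_ge this

theorem iUnion_annulus {Λ : ℝ} (hΛ : 1 < Λ) : (⋃ k : ℤ, annulus Λ k) = ({0}ᶜ : Set E) := by
  ext x
  simp only [mem_iUnion, mem_compl_iff, mem_singleton_iff, ← norm_pos_iff]
  refine ⟨fun ⟨k, hk⟩ => (zpow_pos (zero_lt_one.trans hΛ) k).trans hk.1, fun hx => ?_⟩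
  obtain ⟨k, hk⟩ := exists_mem_Ioc_zpow hx hΛ
  exact ⟨k, hk⟩

theorem preimage_smul_annulus [NormedSpace ℝ E] {Λ : ℝ} (hΛ : 0 < Λ) (k : ℤ) :
    (Λ • ·) ⁻¹' annulus Λ (k + 1) = (annulus Λ k : Set E) := by
  ext x
  simp only [annulus, mem_preimage, mem_ofPred_eq, norm_smul, Real.norm_of_nonneg hΛ.le,
    zpow_add_one₀ hΛ.ne', mul_comm _ Λ, mul_lt_mul_iff_right₀ hΛ, mul_le_mul_iff_right₀ hΛ]

end Annulus

theorem eq_ofReal_zpow_mul_of_succ {g : ℤ → ℝ≥0∞} {c : ℝ} (hc : 0 < c)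
    (h : ∀ k, g (k + 1) = ENNReal.ofReal c * g k) (k : ℤ) :
    g k = ENNReal.ofReal (c ^ k) * g 0 := by
  induction k using Int.induction_on with
  | zero => simp
  | succ n ih =>
    rw [h, ih, ← mul_assoc, ← ofReal_mul hc.le, zpow_add_one₀ hc.ne', mul_comm c]
  | pred n ih =>
    have hn := h (-n - 1)
    rw [sub_add_cancel, ih] at hn
    rw [← ENNReal.mul_right_inj (ofReal_pos.2 hc).ne' ofReal_ne_top, ← hn, ← mul_assoc,
      ← ofReal_mul hc.le, ← zpow_one_add₀ hc.ne', add_sub_cancel]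

theorem summable_one_add_zpow_rpow_neg_mul_zpow {γ Λ q : ℝ} (hΛ : 1 < Λ) (hq : 1 < q)
    (hqγ : q < Λ ^ γ) : Summable fun k : ℤ => (1 + Λ ^ k) ^ (-γ) * q ^ k := by
  have hΛ0 : 0 < Λ := zero_lt_one.trans hΛ
  have hq0 : 0 < q := zero_lt_one.trans hq
  have hγ : 0 < γ := by
    by_contra! hγ
    exact (hq.trans hqγ).not_ge (rpow_le_one_of_one_le_of_nonpos hΛ.le hγ)
  refine Summable.of_nat_of_neg ?_ ?_
  · refine (summable_geometric_of_lt_one (by positivity)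
      ((div_lt_one (by positivity)).2 hqγ)).of_nonneg_of_le (fun n => by positivity) fun n => ?_
    have h : (1 + Λ ^ n) ^ (-γ) ≤ ((Λ ^ γ) ^ n)⁻¹ := by
      rw [← rpow_mul_natCast hΛ0.le, mul_comm, rpow_natCast_mul hΛ0.le,
        ← rpow_neg (by positivity)]
      exact rpow_le_rpow_of_nonpos (by positivity) (by linarith) (by linarith)
    calc _ ≤ ((Λ ^ γ) ^ n)⁻¹ * q ^ n := by rw [zpow_natCast, zpow_natCast]; gcongr
      _ = (q / Λ ^ γ) ^ n := by rw [div_pow, div_eq_inv_mul]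
  · refine (summable_geometric_of_lt_one (by positivity)
      (inv_lt_one_of_one_lt₀ hq)).of_nonneg_of_le (fun n => by positivity) fun n => ?_
    have h : (1 + Λ ^ (-(n : ℤ))) ^ (-γ) ≤ 1 :=
      rpow_le_one_of_one_le_of_nonpos (by linarith [zpow_pos hΛ0 (-(n : ℤ))]) (by linarith)
    calc _ ≤ 1 * q ^ (-(n : ℤ)) := by gcongr
      _ = q⁻¹ ^ n := by rw [one_mul, zpow_neg, zpow_natCast, inv_pow]

section Measure

variable {α F : Type*} [MeasurableSpace α] {μ : Measure α} [NormedAddCommGroup F]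

theorem integral_sq_norm_mul_eq_toReal_lintegral {u : α → F} {w : α → ℝ}
    (hu : AEStronglyMeasurable u μ) (hw : AEStronglyMeasurable w μ) (hw0 : ∀ x, 0 ≤ w x) :
    ∫ x, ‖u x‖ ^ 2 * w x ∂μ = (∫⁻ x, ‖u x‖ₑ ^ 2 * ENNReal.ofReal (w x) ∂μ).toReal := by
  rw [integral_eq_lintegral_of_nonneg_ae (f := fun x => ‖u x‖ ^ 2 * w x)
    (ae_of_all _ fun x => mul_nonneg (by positivity) (hw0 x)) ((hu.norm.pow 2).mul hw)]
  congr 1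
  refine lintegral_congr fun x => ?_
  rw [ofReal_mul (by positivity), ofReal_pow (norm_nonneg _), ofReal_norm]

theorem integral_sq_norm_eq_toReal_lintegral {u : α → F} (hu : AEStronglyMeasurable u μ) :
    ∫ x, ‖u x‖ ^ 2 ∂μ = (∫⁻ x, ‖u x‖ₑ ^ 2 ∂μ).toReal := by
  rw [integral_eq_lintegral_of_nonneg_ae (f := fun x => ‖u x‖ ^ 2)
    (ae_of_all _ fun x => by positivity) (hu.norm.pow 2)]
  congr 1
  refine lintegral_congr fun x => ?_
  rw [ofReal_pow (norm_nonneg _), ofReal_norm]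

theorem memLp_two_withDensity_of_lintegral_lt_top {u : α → F} {w : α → ℝ}
    (hu : AEStronglyMeasurable u μ) (hw : Measurable w)
    (h : ∫⁻ x, ‖u x‖ₑ ^ 2 * ENNReal.ofReal (w x) ∂μ < ⊤) :
    MemLp u 2 (μ.withDensity fun x => ENNReal.ofReal (w x)) := by
  refine ⟨hu.mono_ac (withDensity_absolutelyContinuous _ _), ?_⟩
  rw [eLpNorm_lt_top_iff_lintegral_rpow_enorm_lt_top two_ne_zero ofNat_ne_top,
    lintegral_withDensity_eq_lintegral_mul_non_measurable _ hw.ennreal_ofReal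
      (ae_of_all _ fun _ => ofReal_lt_top)]
  simpa [mul_comm] using h

end Measure

section AnnulusIntegrals

variable {E F : Type*} [NormedAddCommGroup E] [MeasurableSpace E] {μ : Measure E}
  [NormedAddCommGroup F]

theorem setLIntegral_annulus_lt_top [ProperSpace E] {u : E → F}
    (hu : LocallyIntegrable (fun x => ‖u x‖ ^ 2) μ) (Λ : ℝ) (k : ℤ) :
    ∫⁻ x in annulus Λ k, ‖u x‖ₑ ^ 2 ∂μ < ⊤ := by
  have hsub : annulus Λ k ⊆ Metric.closedBall (0 : E) (Λ ^ (k + 1)) := fun x hx => by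
    simpa using hx.2
  have h := ((hu.integrableOn_isCompact (isCompact_closedBall _ _)).mono_set hsub).2
  simpa only [HasFiniteIntegral, enorm_pow, enorm_norm] using h

variable [BorelSpace E]

theorem measurableSet_annulus (Λ : ℝ) (k : ℤ) : MeasurableSet (annulus Λ k : Set E) :=
  measurable_norm measurableSet_Ioc

theorem lintegral_eq_tsum_annulus [NullSingletonClass μ] {Λ : ℝ} (hΛ : 1 < Λ) (f : E → ℝ≥0∞) :
    ∫⁻ x, f x ∂μ = ∑' k : ℤ, ∫⁻ x in annulus Λ k, f x ∂μ := by
  rw [← lintegral_iUnion (measurableSet_annulus Λ) (pairwise_disjoint_annulus hΛ),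
    iUnion_annulus hΛ, restrict_compl_singleton]

theorem lintegral_mul_weight_le_tsum [NullSingletonClass μ] {γ Λ : ℝ} (hγ : 0 ≤ γ)
    (hΛ : 1 < Λ) (f : E → ℝ≥0∞) :
    ∫⁻ x, f x * ENNReal.ofReal ((1 + ‖x‖) ^ (-γ)) ∂μ
      ≤ ∑' k : ℤ, ENNReal.ofReal ((1 + Λ ^ k) ^ (-γ)) * ∫⁻ x in annulus Λ k, f x ∂μ := by
  rw [lintegral_eq_tsum_annulus hΛ]
  refine ENNReal.tsum_le_tsum fun k => ?_
  rw [← lintegral_const_mul' _ _ ofReal_ne_top]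
  refine setLIntegral_mono' (measurableSet_annulus Λ k) fun x hx => ?_
  have hk : 0 < Λ ^ k := zpow_pos (zero_lt_one.trans hΛ) k
  rw [mul_comm (f x)]
  exact mul_le_mul_left (ofReal_le_ofReal <|
    rpow_le_rpow_of_nonpos (by positivity) (by linarith [hx.1]) (neg_nonpos.2 hγ)) _

theorem mul_setLIntegral_annulus_zero_le {γ : ℝ} (hγ : 0 ≤ γ) (Λ : ℝ) (f : E → ℝ≥0∞) :
    ENNReal.ofReal ((1 + Λ) ^ (-γ)) * ∫⁻ x in annulus Λ 0, f x ∂μ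
      ≤ ∫⁻ x, f x * ENNReal.ofReal ((1 + ‖x‖) ^ (-γ)) ∂μ := by
  rw [← lintegral_const_mul' _ _ ofReal_ne_top]
  refine (setLIntegral_mono' (measurableSet_annulus Λ 0) fun x hx => ?_).trans
    (setLIntegral_le_lintegral _ _)
  rw [annulus_zero] at hx
  rw [mul_comm (f x)]
  exact mul_le_mul_left (ofReal_le_ofReal <| rpow_le_rpow_of_nonpos
    (by positivity : (0 : ℝ) < 1 + ‖x‖) (by linarith [hx.2]) (neg_nonpos.2 hγ)) _

variable [NormedSpace ℝ E] [FiniteDimensional ℝ E] (μ) [μ.IsAddHaarMeasure] [NormedSpace ℝ F]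

theorem setLIntegral_annulus_comp_smul {Λ : ℝ} (hΛ : 0 < Λ) (k : ℤ) (f : E → ℝ≥0∞) :
    ∫⁻ x in annulus Λ k, f (Λ • x) ∂μ
      = ENNReal.ofReal (Λ ^ finrank ℝ E)⁻¹ * ∫⁻ x in annulus Λ (k + 1), f x ∂μ := by
  have he : MeasurableEmbedding (Λ • · : E → E) := measurableEmbedding_const_smul₀ hΛ.ne'
  rw [← preimage_smul_annulus hΛ, ← he.lintegral_map, ← he.restrict_map,
    Measure.map_addHaar_smul μ hΛ.ne', Measure.restrict_smul, lintegral_smul_measure,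
    abs_of_pos (by positivity), smul_eq_mul]

theorem setLIntegral_annulus_succ_of_dss {Λ : ℝ} (hΛ : 0 < Λ) {u : E → F}
    (hu : ∀ᵐ x ∂μ, u x = Λ • u (Λ • x)) (k : ℤ) :
    ENNReal.ofReal Λ ^ 2 * ∫⁻ x in annulus Λ (k + 1), ‖u x‖ₑ ^ 2 ∂μ
      = ENNReal.ofReal Λ ^ finrank ℝ E * ∫⁻ x in annulus Λ k, ‖u x‖ₑ ^ 2 ∂μ := by
  have hsq : ∀ᵐ x ∂μ, ‖u x‖ₑ ^ 2 = ENNReal.ofReal Λ ^ 2 * ‖u (Λ • x)‖ₑ ^ 2 := by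
    filter_upwards [hu] with x hx
    rw [hx, enorm_smul, mul_pow, Real.enorm_of_nonneg hΛ.le]
  have hΛd : ENNReal.ofReal Λ ^ finrank ℝ E * ENNReal.ofReal (Λ ^ finrank ℝ E)⁻¹ = 1 := by
    rw [ofReal_inv_of_pos (by positivity), ofReal_pow hΛ.le,
      ENNReal.mul_inv_cancel (by simp [hΛ]) (by simp)]
  have hJ : ∫⁻ x in annulus Λ k, ‖u x‖ₑ ^ 2 ∂μ = ENNReal.ofReal Λ ^ 2 *
      (ENNReal.ofReal (Λ ^ finrank ℝ E)⁻¹ * ∫⁻ x in annulus Λ (k + 1), ‖u x‖ₑ ^ 2 ∂μ) := by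
    rw [lintegral_congr_ae (ae_restrict_of_ae hsq), lintegral_const_mul' _ _ (by simp),
      setLIntegral_annulus_comp_smul μ hΛ k fun y => ‖u y‖ₑ ^ 2]
  rw [hJ, ← one_mul (_ * ∫⁻ x in annulus Λ (k + 1), _ ∂μ), ← hΛd]
  ring

theorem setLIntegral_annulus_of_dss {Λ : ℝ} (hΛ : 0 < Λ) (hd : 2 ≤ finrank ℝ E) {u : E → F}
    (hu : ∀ᵐ x ∂μ, u x = Λ • u (Λ • x)) (k : ℤ) :
    ∫⁻ x in annulus Λ k, ‖u x‖ₑ ^ 2 ∂μ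
      = ENNReal.ofReal ((Λ ^ (finrank ℝ E - 2)) ^ k) * ∫⁻ x in annulus Λ 0, ‖u x‖ₑ ^ 2 ∂μ := by
  refine eq_ofReal_zpow_mul_of_succ (g := fun k => ∫⁻ x in annulus Λ k, ‖u x‖ₑ ^ 2 ∂μ)
    (pow_pos hΛ _) (fun k => ?_) k
  have h := setLIntegral_annulus_succ_of_dss μ hΛ hu k
  rwa [← Nat.add_sub_cancel' hd, pow_add, mul_assoc, ENNReal.mul_right_inj (by simp [hΛ])
    (by simp), ← ofReal_pow hΛ.le] at h

theorem lintegral_sq_enorm_mul_weight_le_of_dss {γ Λ : ℝ} (hγ : 0 ≤ γ) (hΛ : 1 < Λ)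
    (hd : 2 ≤ finrank ℝ E) {u : E → F} (hu : ∀ᵐ x ∂μ, u x = Λ • u (Λ • x)) :
    ∫⁻ x, ‖u x‖ₑ ^ 2 * ENNReal.ofReal ((1 + ‖x‖) ^ (-γ)) ∂μ
      ≤ (∑' k : ℤ, ENNReal.ofReal ((1 + Λ ^ k) ^ (-γ) * (Λ ^ (finrank ℝ E - 2)) ^ k))
        * ∫⁻ x in annulus Λ 0, ‖u x‖ₑ ^ 2 ∂μ := by
  have : Nontrivial E := Module.nontrivial_of_finrank_pos (R := ℝ) (by omega)
  calc _ ≤ ∑' k : ℤ, ENNReal.ofReal ((1 + Λ ^ k) ^ (-γ)) * ∫⁻ x in annulus Λ k, ‖u x‖ₑ ^ 2 ∂μ :=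
        lintegral_mul_weight_le_tsum hγ hΛ _
    _ = _ := by
      rw [← ENNReal.tsum_mul_right]
      refine tsum_congr fun k => ?_
      have hk : 0 < Λ ^ k := zpow_pos (zero_lt_one.trans hΛ) k
      rw [setLIntegral_annulus_of_dss μ (zero_lt_one.trans hΛ) hd hu k, ← mul_assoc,
        ← ofReal_mul (rpow_nonneg (by positivity) _)]

end AnnulusIntegrals

/-- If `γ > 1`, `λ > 1` and `u₀ ∈ L²_loc(ℝ³)` is λ-discretely self-similar
(`u₀(x) = λ u₀(λx)` a.e.), then `u₀ ∈ L²(w_γ dx)` and for constants `A, B > 0` depending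
only on `γ` and `λ`:
`A ∫_{1<|x|≤λ} |u₀|² dx ≤ ∫ |u₀|² w_γ dx ≤ B ∫_{1<|x|≤λ} |u₀|² dx`. -/
theorem dss_mem_weighted_L2 (γ Λ : ℝ) (hγ : 1 < γ) (hΛ : 1 < Λ) :
    ∃ A B : ℝ, 0 < A ∧ 0 < B ∧
      ∀ u₀ : EuclideanSpace ℝ (Fin 3) → EuclideanSpace ℝ (Fin 3),
        AEStronglyMeasurable u₀ volume →
        LocallyIntegrable (fun x => ‖u₀ x‖ ^ 2) volume →
        (∀ᵐ x ∂(volume : Measure (EuclideanSpace ℝ (Fin 3))), u₀ x = Λ • u₀ (Λ • x)) →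
        MemLp u₀ 2 (volume.withDensity fun x => ENNReal.ofReal ((1 + ‖x‖) ^ (-γ))) ∧
        A * ∫ x in {x : EuclideanSpace ℝ (Fin 3) | 1 < ‖x‖ ∧ ‖x‖ ≤ Λ}, ‖u₀ x‖ ^ 2
          ≤ ∫ x, ‖u₀ x‖ ^ 2 * (1 + ‖x‖) ^ (-γ) ∧
        ∫ x, ‖u₀ x‖ ^ 2 * (1 + ‖x‖) ^ (-γ)
          ≤ B * ∫ x in {x : EuclideanSpace ℝ (Fin 3) | 1 < ‖x‖ ∧ ‖x‖ ≤ Λ}, ‖u₀ x‖ ^ 2 := by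
  have hΛ0 : 0 < Λ := zero_lt_one.trans hΛ
  have hterm : ∀ k : ℤ, 0 ≤ (1 + Λ ^ k) ^ (-γ) * Λ ^ k := fun k =>
    mul_nonneg (rpow_nonneg (by positivity) _) (zpow_nonneg hΛ0.le k)
  have hsum : Summable fun k : ℤ => (1 + Λ ^ k) ^ (-γ) * Λ ^ k :=
    summable_one_add_zpow_rpow_neg_mul_zpow hΛ hΛ (by simpa using rpow_lt_rpow_of_exponent_lt hΛ hγ)
  refine ⟨(1 + Λ) ^ (-γ), ∑' k : ℤ, (1 + Λ ^ k) ^ (-γ) * Λ ^ k, by positivity,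
    hsum.tsum_pos hterm 0 (by simp; positivity), fun u hu hloc hdss => ?_⟩
  have hJ := setLIntegral_annulus_lt_top hloc Λ 0
  have hlower := mul_setLIntegral_annulus_zero_le (μ := volume) (zero_le_one.trans hγ.le) Λ
    fun x => ‖u x‖ₑ ^ 2
  have hupper := lintegral_sq_enorm_mul_weight_le_of_dss volume (zero_le_one.trans hγ.le) hΛ
    (by simp) hdss
  simp only [finrank_euclideanSpace_fin, Nat.reduceSub, pow_one,
    ← ofReal_tsum_of_nonneg hterm hsum] at hupper
  have hL := hupper.trans_lt (mul_lt_top ofReal_lt_top hJ)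
  have hw : Continuous fun x : EuclideanSpace ℝ (Fin 3) => (1 + ‖x‖) ^ (-γ) :=
    (by fun_prop : Continuous fun x : EuclideanSpace ℝ (Fin 3) => 1 + ‖x‖).rpow_const
      fun x => Or.inl (by positivity)
  rw [← annulus_zero, integral_sq_norm_mul_eq_toReal_lintegral hu hw.aestronglyMeasurable
    fun x => by positivity, integral_sq_norm_eq_toReal_lintegral hu.restrict]
  refine ⟨memLp_two_withDensity_of_lintegral_lt_top hu hw.measurable hL, ?_, ?_⟩
  · simpa only [toReal_mul, toReal_ofReal (by positivity : (0 : ℝ) ≤ (1 + Λ) ^ (-γ))]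
      using toReal_mono hL.ne hlower
  · simpa only [toReal_mul, toReal_ofReal (tsum_nonneg hterm)]
      using toReal_mono (mul_lt_top ofReal_lt_top hJ).ne hupper
end

section
/- For λ-DSS u₀ and k ∈ ℤ, the annular integrals satisfy ∫_{λ^k<|x|<λ^{k+1}} |u₀(x)|² w_γ(x) dx ≤ (λ^k/(1+λ^k)^γ) ∫_{1<|x|<λ} |u₀(x)|² dx, and the series Σ_{k∈ℤ} λ^k/(1+λ^k)^γ converges when γ > 1. -/
/-!
Discrete self-similarity `u x = Λ • u (Λ • x)` propagates to every power `Λ ^ k`, so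
`‖u (Λ ^ k • y)‖² = Λ ^ (-2k) ‖u y‖²`. The substitution `x = Λ ^ k • y`, with Jacobian
`Λ ^ (3k)`, maps the annulus `1 < ‖y‖ < Λ` onto `Λ ^ k < ‖x‖ < Λ ^ (k + 1)`, where the weight is
at most `(1 + Λ ^ k) ^ (-γ)`. The series is dominated by the geometric series `(Λ ^ (1 - γ)) ^ k`
for `k ≥ 0` and `Λ ^ k` for `k < 0`.
-/

open MeasureTheory Real ENNReal
open Measure Module Pointwise

section SelfSimilar

variable {E F : Type*} [NormedAddCommGroup E] [NormedSpace ℝ E] [MeasurableSpace E]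
  [NormedAddCommGroup F] [NormedSpace ℝ F]

def IsDiscretelySelfSimilar (μ : Measure E) (Λ : ℝ) (u : E → F) : Prop :=
  ∀ᵐ x ∂μ, u x = Λ • u (Λ • x)

namespace IsDiscretelySelfSimilar

variable {μ : Measure E} {u : E → F} {a b : ℝ}

theorem norm_comp_smul (hu : IsDiscretelySelfSimilar μ a u) (ha : 0 < a) :
    ∀ᵐ x ∂μ, ‖u (a • x)‖ = a⁻¹ * ‖u x‖ := by
  filter_upwards [hu] with x hx
  rw [hx, norm_smul, norm_of_nonneg ha.le, inv_mul_cancel_left₀ ha.ne']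

variable [BorelSpace E] [FiniteDimensional ℝ E] [μ.IsAddHaarMeasure]

theorem mul (ha : IsDiscretelySelfSimilar μ a u) (hb : IsDiscretelySelfSimilar μ b u)
    (ha0 : a ≠ 0) : IsDiscretelySelfSimilar μ (a * b) u := by
  filter_upwards [ha, (quasiMeasurePreserving_smul μ ha0).ae hb] with x hax hbx
  rw [hax, hbx, smul_smul, smul_smul, mul_comm b a]

theorem inv (ha : IsDiscretelySelfSimilar μ a u) (ha0 : a ≠ 0) :
    IsDiscretelySelfSimilar μ a⁻¹ u := by
  filter_upwards [(quasiMeasurePreserving_smul μ (inv_ne_zero ha0)).ae ha] with x hx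
  rw [smul_inv_smul₀ ha0] at hx
  rw [hx, inv_smul_smul₀ ha0]

theorem zpow (ha : IsDiscretelySelfSimilar μ a u) (ha0 : a ≠ 0) (k : ℤ) :
    IsDiscretelySelfSimilar μ (a ^ k) u := by
  induction k using Int.induction_on with
  | zero => simp [IsDiscretelySelfSimilar]
  | succ n ih => rw [zpow_add_one₀ ha0]; exact ih.mul ha (zpow_ne_zero _ ha0)
  | pred n ih => rw [zpow_sub_one₀ ha0]; exact ih.mul (ha.inv ha0) (zpow_ne_zero _ ha0)

end IsDiscretelySelfSimilar

end SelfSimilar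

theorem smul_setOf_norm_mem_Ioo {E : Type*} [NormedAddCommGroup E] [NormedSpace ℝ E] {R : ℝ}
    (hR : 0 < R) (a b : ℝ) :
    R • {x : E | a < ‖x‖ ∧ ‖x‖ < b} = {x | R * a < ‖x‖ ∧ ‖x‖ < R * b} := by
  ext x
  simp only [Set.mem_smul_set_iff_inv_smul_mem₀ hR.ne', Set.mem_ofPred_eq, norm_smul, norm_inv,
    norm_of_nonneg hR.le, inv_mul_eq_div, lt_div_iff₀ hR, div_lt_iff₀ hR, mul_comm R]

theorem setIntegral_sq_norm_mul_weight_annulus_le {E F : Type*} [NormedAddCommGroup E]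
    [NormedSpace ℝ E] [MeasurableSpace E] [BorelSpace E] [FiniteDimensional ℝ E]
    [NormedAddCommGroup F] [NormedSpace ℝ F] {μ : Measure E} [μ.IsAddHaarMeasure]
    {u : E → F} {γ Λ R : ℝ} (hγ : 0 ≤ γ) (hR : 0 < R) (hu : IsDiscretelySelfSimilar μ R u)
    (hloc : LocallyIntegrable (fun x => ‖u x‖ ^ 2) μ) :
    ∫ x in {x : E | R < ‖x‖ ∧ ‖x‖ < R * Λ}, ‖u x‖ ^ 2 * (1 + ‖x‖) ^ (-γ) ∂μ
      ≤ R ^ finrank ℝ E / R ^ 2 / (1 + R) ^ γ *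
          ∫ x in {x : E | 1 < ‖x‖ ∧ ‖x‖ < Λ}, ‖u x‖ ^ 2 ∂μ := by
  set A := {x : E | 1 < ‖x‖ ∧ ‖x‖ < Λ}
  have hA : MeasurableSet A :=
    (measurableSet_lt measurable_const measurable_norm).inter
      (measurableSet_lt measurable_norm measurable_const)
  have hint : IntegrableOn (fun x => ‖u x‖ ^ 2) A μ :=
    (hloc.integrableOn_isCompact (isCompact_closedBall 0 Λ)).mono_set
      fun x hx => mem_closedBall_zero_iff.2 hx.2.le
  have hpointwise : ∀ᵐ y ∂μ.restrict A, ‖u (R • y)‖ ^ 2 * (1 + ‖R • y‖) ^ (-γ)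
      ≤ (R ^ 2)⁻¹ * (1 + R) ^ (-γ) * ‖u y‖ ^ 2 := by
    filter_upwards [ae_restrict_of_ae (hu.norm_comp_smul hR), ae_restrict_mem hA]
      with y hy hyA
    have hweight : (1 + ‖R • y‖) ^ (-γ) ≤ (1 + R) ^ (-γ) := by
      rw [norm_smul, norm_of_nonneg hR.le]
      exact rpow_le_rpow_of_nonpos (by positivity) (by nlinarith [hyA.1]) (by linarith)
    have := mul_le_mul_of_nonneg_left hweight (by positivity : 0 ≤ (R ^ 2)⁻¹ * ‖u y‖ ^ 2)
    rw [hy]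
    linear_combination this
  have hscale := setIntegral_comp_smul_of_pos μ
    (fun x => ‖u x‖ ^ 2 * (1 + ‖x‖) ^ (-γ)) A hR
  rw [smul_setOf_norm_mem_Ioo hR, mul_one] at hscale
  calc _ = R ^ finrank ℝ E * ∫ y in A, ‖u (R • y)‖ ^ 2 * (1 + ‖R • y‖) ^ (-γ) ∂μ := by
        rw [hscale, smul_eq_mul, mul_inv_cancel_left₀ (by positivity)]
    _ ≤ R ^ finrank ℝ E * ∫ y in A, (R ^ 2)⁻¹ * (1 + R) ^ (-γ) * ‖u y‖ ^ 2 ∂μ := by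
        exact mul_le_mul_of_nonneg_left (integral_mono_of_nonneg
          (.of_forall fun y => by positivity) (hint.const_mul _) hpointwise) (by positivity)
    _ = _ := by
        rw [integral_const_mul, rpow_neg (by positivity)]
        ring

theorem summable_zpow_div_one_add_zpow_rpow {Λ γ : ℝ} (hΛ : 1 < Λ) (hγ : 1 < γ) :
    Summable fun k : ℤ => Λ ^ k / (1 + Λ ^ k) ^ γ := by
  have hΛ0 : 0 < Λ := one_pos.trans hΛ
  apply Summable.of_nat_of_neg
  · refine .of_nonneg_of_le (fun n => by positivity) (fun n => ?_)
      (summable_geometric_of_lt_one (by positivity)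
        (rpow_lt_one_of_one_lt_of_neg hΛ (by linarith : 1 - γ < 0)))
    have hpow : 0 < Λ ^ n := by positivity
    calc Λ ^ (n : ℤ) / (1 + Λ ^ (n : ℤ)) ^ γ ≤ Λ ^ n / (Λ ^ n) ^ γ := by
          rw [zpow_natCast]
          gcongr
          linarith
      _ = (Λ ^ (1 - γ)) ^ n := by
          rw [← rpow_one_sub' hpow.le (by linarith), ← Real.rpow_natCast, ← Real.rpow_natCast,
            ← rpow_mul hΛ0.le, ← rpow_mul hΛ0.le, mul_comm]
  · refine .of_nonneg_of_le (fun n => by positivity) (fun n => ?_)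
      (summable_geometric_of_lt_one (inv_nonneg.2 hΛ0.le) (inv_lt_one_of_one_lt₀ hΛ))
    have hone : 1 ≤ (1 + Λ ^ (-(n : ℤ))) ^ γ :=
      one_le_rpow (by linarith [zpow_pos hΛ0 (-(n : ℤ))]) (by linarith)
    calc Λ ^ (-(n : ℤ)) / (1 + Λ ^ (-(n : ℤ))) ^ γ ≤ Λ ^ (-(n : ℤ)) :=
          div_le_self (zpow_pos hΛ0 _).le hone
      _ = Λ⁻¹ ^ n := by rw [zpow_neg, zpow_natCast, inv_pow]

theorem dss_annular_bound_general (γ Λ : ℝ) (hγ : 1 < γ) (hΛ : 1 < Λ)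
    (u₀ : EuclideanSpace ℝ (Fin 3) → EuclideanSpace ℝ (Fin 3))
    (hloc : LocallyIntegrable (fun x => ‖u₀ x‖ ^ 2) volume)
    (hdss : ∀ᵐ x ∂(volume : Measure (EuclideanSpace ℝ (Fin 3))), u₀ x = Λ • u₀ (Λ • x)) :
    (∀ k : ℤ,
      ∫ x in {x : EuclideanSpace ℝ (Fin 3) | Λ ^ k < ‖x‖ ∧ ‖x‖ < Λ ^ (k + 1)},
          ‖u₀ x‖ ^ 2 * (1 + ‖x‖) ^ (-γ)
        ≤ (Λ ^ k / (1 + Λ ^ k) ^ γ) *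
            ∫ x in {x : EuclideanSpace ℝ (Fin 3) | 1 < ‖x‖ ∧ ‖x‖ < Λ}, ‖u₀ x‖ ^ 2)
    ∧ Summable (fun k : ℤ => Λ ^ k / (1 + Λ ^ k) ^ γ) := by
  have hΛ0 : Λ ≠ 0 := (one_pos.trans hΛ).ne'
  refine ⟨fun k => ?_, summable_zpow_div_one_add_zpow_rpow hΛ hγ⟩
  have hdssk : IsDiscretelySelfSimilar volume (Λ ^ k) u₀ :=
    IsDiscretelySelfSimilar.zpow hdss hΛ0 k
  have h := setIntegral_sq_norm_mul_weight_annulus_le (γ := γ) (Λ := Λ) (by linarith)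
    (zpow_pos (one_pos.trans hΛ) k) hdssk hloc
  rwa [finrank_euclideanSpace_fin, ← zpow_add_one₀ hΛ0, pow_succ,
    mul_div_cancel_left₀ _ (pow_ne_zero 2 (zpow_ne_zero k hΛ0))] at h

/-- For a λ-DSS field `u₀` and `k ∈ ℤ`, the annular integrals satisfy
`∫_{λ^k<|x|<λ^{k+1}} |u₀|² w_γ dx ≤ (λ^k/(1+λ^k)^γ) ∫_{1<|x|<λ} |u₀|² dx`,
and `Σ_{k∈ℤ} λ^k/(1+λ^k)^γ` converges when `γ > 1`. -/
theorem dss_annular_bound (γ Λ : ℝ) (hγ : 1 < γ) (hΛ : 1 < Λ)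
    (u₀ : EuclideanSpace ℝ (Fin 3) → EuclideanSpace ℝ (Fin 3))
    (hmeas : AEStronglyMeasurable u₀ volume)
    (hloc : LocallyIntegrable (fun x => ‖u₀ x‖ ^ 2) volume)
    (hdss : ∀ᵐ x ∂(volume : Measure (EuclideanSpace ℝ (Fin 3))), u₀ x = Λ • u₀ (Λ • x)) :
    (∀ k : ℤ,
      ∫ x in {x : EuclideanSpace ℝ (Fin 3) | Λ ^ k < ‖x‖ ∧ ‖x‖ < Λ ^ (k + 1)},
          ‖u₀ x‖ ^ 2 * (1 + ‖x‖) ^ (-γ)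
        ≤ (Λ ^ k / (1 + Λ ^ k) ^ γ) *
            ∫ x in {x : EuclideanSpace ℝ (Fin 3) | 1 < ‖x‖ ∧ ‖x‖ < Λ}, ‖u₀ x‖ ^ 2)
    ∧ Summable (fun k : ℤ => Λ ^ k / (1 + Λ ^ k) ^ γ) :=
  dss_annular_bound_general γ Λ hγ hΛ u₀ hloc hdss
end
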